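/- arXiv:2409.00733 — 3 statements merged into one kernel-verified Lean document; each statement's English description precedes it below -/
import Mathlib

section
/- Let x_1,…,x_n ∈ ℝ^p, y_1,…,y_n ∈ {±1}, and z_k := y_k x_k. Suppose there exists c > 0 such that (1) p/c ≤ ‖z_k‖² ≤ c p for all k ∈ [n], and (2) |z_i · z_j| ≤ c (‖μ‖² + √p (log(n/δ))^{1/α}) for all i ≠ j ∈ [n], for some μ ∈ ℝ^p, δ > 0, α > 0. If moreover p > 2 c² n max(‖μ‖², √p (log(n/δ))^{1/α}), then the data {(x_k, y_k)}_{k=1}^n are linearly separable; in fact v := Σ_{i=1}^n z_i satisfies y_k (v · x_k) > 0 for every k ∈ [n]. -/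
open MeasureTheory Real
open scoped ENNReal

noncomputable section

/-- The set of admissible constants in the definition of the exponential
Orlicz (quasi-)norm of order `a` of a real random variable `X` under `μ`. -/
def orliczSet {Ω : Type*} [MeasurableSpace Ω] (μ : Measure Ω) (a : ℝ) (X : Ω → ℝ) : Set ℝ :=
  {t : ℝ | 0 < t ∧ ∫⁻ ω, ENNReal.ofReal (Real.exp (|X ω| ^ a / t ^ a)) ∂μ ≤ 2}

/-- The exponential Orlicz norm `‖X‖_{ψ_a}`. -/
def orliczNorm {Ω : Type*} [MeasurableSpace Ω] (μ : Measure Ω) (a : ℝ) (X : Ω → ℝ) : ℝ :=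
  sInf (orliczSet μ a X)

/-- Euclidean dot product on `Fin p → ℝ`. -/
def dotp {p : ℕ} (u v : Fin p → ℝ) : ℝ := ∑ i, u i * v i

/-- Squared Euclidean norm on `Fin p → ℝ`. -/
def sqnorm {p : ℕ} (u : Fin p → ℝ) : ℝ := ∑ i, u i ^ 2

/-- Euclidean norm on `Fin p → ℝ`. -/
def euclNorm {p : ℕ} (u : Fin p → ℝ) : ℝ := Real.sqrt (sqnorm u)

/-- Total variation distance between two measures. -/
def tvDist {Ω : Type*} [MeasurableSpace Ω] (P Q : Measure Ω) : ℝ :=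
  ⨆ s : {s : Set Ω // MeasurableSet s}, |(P s.1).toReal - (Q s.1).toReal|

/-- The uniform distribution on `{-1, 1} ⊆ ℝ`. -/
def signMeasure : Measure ℝ :=
  (2 : ℝ≥0∞)⁻¹ • Measure.dirac (-1) + (2 : ℝ≥0∞)⁻¹ • Measure.dirac 1

instance : IsProbabilityMeasure signMeasure := by
  constructor
  simp [signMeasure, Measure.add_apply, Measure.smul_apply, smul_eq_mul]
  exact ENNReal.inv_two_add_inv_two

/-- The label-flip distribution: takes the value `-1` with probability `η`
and the value `1` with probability `1 - η`. -/
def flipM (η : ℝ) : Measure ℝ :=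
  ENNReal.ofReal η • Measure.dirac (-1) + ENNReal.ofReal (1 - η) • Measure.dirac 1

instance (η : ℝ) : IsFiniteMeasure (flipM η) := by
  constructor
  simp only [flipM, Measure.add_apply, Measure.smul_apply, smul_eq_mul, measure_univ, mul_one]
  exact ENNReal.add_lt_top.mpr ⟨ENNReal.ofReal_lt_top, ENNReal.ofReal_lt_top⟩

/-- The "clean" distribution `P̃`: the law of `(U q + ỹ μ, ỹ)` where `q ∼ P_clust` and
`ỹ` is a uniform random sign, independent of `q`. -/
def cleanDist {p : ℕ} (Pc : Fin p → Measure ℝ) [∀ j, SigmaFinite (Pc j)]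
    (U : Matrix (Fin p) (Fin p) ℝ) (μv : Fin p → ℝ) : Measure ((Fin p → ℝ) × ℝ) :=
  ((Measure.pi Pc).prod signMeasure).map fun qy => (U.mulVec qy.1 + qy.2 • μv, qy.2)

/-- Largest singular value of a matrix, i.e. its Euclidean operator norm. -/
def s1 {p n : ℕ} (X : Matrix (Fin p) (Fin n) ℝ) : ℝ :=
  sSup {r : ℝ | ∃ u : Fin n → ℝ, sqnorm u ≤ 1 ∧ r = euclNorm (X.mulVec u)}

/-- Linear separability of a labelled sample. -/
def LinSep {p n : ℕ} (x : Fin n → Fin p → ℝ) (y : Fin n → ℝ) : Prop :=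
  ∃ v : Fin p → ℝ, ∀ i, 0 < y i * dotp v (x i)

/-- `w` is the maximum margin (minimum norm) classifier for the sample `(x, y)`. -/
def IsMaxMargin {p n : ℕ} (x : Fin n → Fin p → ℝ) (y : Fin n → ℝ) (w : Fin p → ℝ) : Prop :=
  (∀ i, 1 ≤ y i * dotp w (x i)) ∧
    ∀ u : Fin p → ℝ, (∀ i, 1 ≤ y i * dotp u (x i)) → euclNorm w ≤ euclNorm u

/-- The generalized normal distribution with location `0`, scale `σ` and shape `γ`. -/
def genNormal (σ γ : ℝ) : Measure ℝ :=
  volume.withDensity fun x =>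
    ENNReal.ofReal (γ / (2 * σ * Real.Gamma (1 / γ)) * Real.exp (-|x / σ| ^ γ))

/-- The sample-generating measure in the reduced model (`U = I`): independent coordinates
`q_k ∼ P_clust` (i.i.d.), `ỹ_k` uniform signs (i.i.d.), and label-flip signs `ε_k` (i.i.d.,
`ε_k = -1` with probability `η`). -/
def sampleMeasure (p n : ℕ) (Pc : Fin p → Measure ℝ) [∀ j, SigmaFinite (Pc j)] (η : ℝ) :
    Measure ((Fin n → Fin p → ℝ) × ((Fin n → ℝ) × (Fin n → ℝ))) :=
  (Measure.pi fun _ : Fin n => Measure.pi Pc).prod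
    ((Measure.pi fun _ : Fin n => signMeasure).prod (Measure.pi fun _ : Fin n => flipM η))

/-- The input vector `x = q + ỹ μ` in the reduced model. -/
def xvec {p : ℕ} (μv : Fin p → ℝ) (q : Fin p → ℝ) (ty : ℝ) : Fin p → ℝ :=
  fun i => q i + ty * μv i

/-- The vector `z = y x = (ε ỹ) (q + ỹ μ)` in the reduced model. -/
def zvec {p : ℕ} (μv : Fin p → ℝ) (q : Fin p → ℝ) (ty e : ℝ) : Fin p → ℝ :=
  fun i => e * ty * (q i + ty * μv i)

end

/-- under the norm and inner-product conditions on the vectors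
`z_k = y_k x_k`, if `p > 2 c² n max(‖μ‖², √p (log(n/δ))^{1/α})`, then the data are
linearly separable; in fact `v = ∑ z_i` separates. -/
theorem linearly_separable_of_concentration
    (p n : ℕ) (x : Fin n → Fin p → ℝ) (y : Fin n → ℝ)
    (hy : ∀ k, y k = 1 ∨ y k = -1) (μv : Fin p → ℝ) (δ a c : ℝ)
    (hc : 0 < c) (hδ : 0 < δ) (ha : 0 < a)
    (h1 : ∀ k, (p : ℝ) / c ≤ sqnorm (y k • x k) ∧ sqnorm (y k • x k) ≤ c * p)
    (h2 : ∀ i j, i ≠ j →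
      |dotp (y i • x i) (y j • x j)| ≤
        c * (sqnorm μv + Real.sqrt p * Real.log (n / δ) ^ (1 / a)))
    (hp : 2 * c ^ 2 * n * max (sqnorm μv) (Real.sqrt p * Real.log (n / δ) ^ (1 / a))
      < (p : ℝ)) :
    LinSep x y ∧ ∀ k, 0 < y k * dotp (∑ i, y i • x i) (x k) := by
  set s : ℝ := sqnorm μv + Real.sqrt p * Real.log (n / δ) ^ (1 / a) with hs
  set M : ℝ := max (sqnorm μv) (Real.sqrt p * Real.log (n / δ) ^ (1 / a)) with hM
  have hM0 : 0 ≤ M := le_trans (Finset.sum_nonneg fun i _ => sq_nonneg _) (le_max_left _ _)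
  have hsM : s ≤ 2 * M := by
    have := le_max_left (sqnorm μv) (Real.sqrt p * Real.log (n / δ) ^ (1 / a))
    have := le_max_right (sqnorm μv) (Real.sqrt p * Real.log (n / δ) ^ (1 / a))
    simp only [hs, hM]; linarith
  clear_value s M
  have key : ∀ k, 0 < y k * dotp (∑ i, y i • x i) (x k) := by
    intro k
    have hn : (1 : ℝ) ≤ n := by
      have : 0 < n := Fin.pos k
      exact_mod_cast this
    have e1 : y k * dotp (∑ i, y i • x i) (x k)
        = ∑ i, dotp (y i • x i) (y k • x k) := by
      simp only [dotp, Pi.smul_apply, smul_eq_mul, Finset.sum_apply, Finset.mul_sum,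
        Finset.sum_mul]
      rw [Finset.sum_comm]
      exact Finset.sum_congr rfl fun i _ => Finset.sum_congr rfl fun j _ => by ring
    have e2 : ∑ i, dotp (y i • x i) (y k • x k)
        = (∑ i ∈ Finset.univ.erase k, dotp (y i • x i) (y k • x k))
          + dotp (y k • x k) (y k • x k) := by
      rw [Finset.sum_erase_add _ _ (Finset.mem_univ k)]
    have hself : (p : ℝ) / c ≤ dotp (y k • x k) (y k • x k) := by
      have := (h1 k).1
      simpa [dotp, sqnorm, sq] using this
    have hcross : ∀ i ∈ Finset.univ.erase k, -(c * s) ≤ dotp (y i • x i) (y k • x k) := by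
      intro i hi
      have hik : i ≠ k := Finset.ne_of_mem_erase hi
      have h' := abs_le.mp (h2 i k hik)
      linarith [h'.1]
    have hsum : -((n - 1) * (c * s)) ≤ ∑ i ∈ Finset.univ.erase k, dotp (y i • x i) (y k • x k) := by
      calc -((n - 1) * (c * s))
          = ∑ _i ∈ Finset.univ.erase k, -(c * s) := by
            rw [Finset.sum_const, Finset.card_erase_of_mem (Finset.mem_univ k),
              Finset.card_univ, Fintype.card_fin, nsmul_eq_mul]
            have hn' : 1 ≤ n := Fin.pos k
            push_cast [Nat.cast_sub hn']
            ring
        _ ≤ _ := Finset.sum_le_sum hcross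
    have hcs : c * s ≤ c * (2 * M) := by
      exact mul_le_mul_of_nonneg_left hsM hc.le
    have hfinal : 0 < (p : ℝ) / c - (n - 1) * (c * s) := by
      have h3 : (n - 1) * (c * s) ≤ n * (c * (2 * M)) := by
        have h4 : (n - 1 : ℝ) * (c * s) ≤ (n - 1) * (c * (2 * M)) := by
          apply mul_le_mul_of_nonneg_left hcs; linarith
        have h5 : (n - 1 : ℝ) * (c * (2 * M)) ≤ n * (c * (2 * M)) := by
          apply mul_le_mul_of_nonneg_right (by linarith)
          positivity
        linarith
      have h6 : (n : ℝ) * (c * (2 * M)) < p / c := by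
        rw [lt_div_iff₀ hc]
        calc (n : ℝ) * (c * (2 * M)) * c = 2 * c ^ 2 * n * M := by ring
          _ < p := hp
      linarith
    rw [e1, e2]
    linarith
  exact ⟨⟨∑ i, y i • x i, key⟩, key⟩
end

section
/- Let z_1,…,z_n ∈ ℝ^p and c₁ ≥ 1 satisfy p/c₁ ≤ ‖z_k‖² ≤ c₁ p for all k, and |z_i · z_j| ≤ c₁ B for all i ≠ j, where B > 0 is a constant with p > 8 c₁² n B. Let θ^{(t)} be the gradient descent iterates on the logistic loss R(θ) = Σ_k log(1 + exp(−θ·z_k)) starting from θ^{(0)} = 0 with learning rate β ≤ (1/(2c₁)) (p + 2 n (B))^{-1}. Then there exists a constant c₃ (one may take c₃ = 8 c₁²) such that for all iterations t ≥ 0: max_{i,j ∈ [n]} (1 + exp(θ^{(t)} · z_j)) / (1 + exp(θ^{(t)} · z_i)) ≤ c₃. -/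
open MeasureTheory Real
open scoped ENNReal

/-!
Write `a_k = θ · z_k` for the margins and `g_k = (1 + e^{a_k})⁻¹` for the logistic weights, so
that one step of gradient descent adds `Δ_i = β ∑_l g_l (z_l · z_i)` to `a_i`. Since the Gram
matrix is nearly diagonal (`‖z_k‖² ≍ p`, `|z_l · z_i| ≤ c₁ B ≪ p / n`), `Δ_i ≈ β g_i ‖z_i‖²`.
By induction all margins stay nonnegative and `1 + e^{a_j} ≤ 8 c₁² (1 + e^{a_i})`. If the ratio is
at most two thirds of this bound, a single step, of size at most `1/3`, multiplies it by at most
`e^{1/3} ≤ 3/2`. Otherwise `g_i` is so much larger than `g_j` that `Δ_j ≤ Δ_i / 2`, and then the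
ratio does not increase.
-/

open Finset

lemma one_add_exp_add_le (x d : ℝ) : 1 + exp (x + d) ≤ exp (max d 0) * (1 + exp x) := by
  have h1 : 1 ≤ exp (max d 0) := one_le_exp (le_max_right d 0)
  have h2 : exp (x + d) ≤ exp (max d 0) * exp x := by
    rw [← exp_add]
    exact exp_le_exp.2 (by linarith [le_max_left d 0])
  rw [mul_add, mul_one]
  linarith

-- `RHS - LHS = (e^{d/2} - 1) (e^{a + d/2} - 1)`.
lemma exp_half_mul_one_add_exp_le {a d : ℝ} (hd : 0 ≤ d) (had : 0 ≤ a + d / 2) :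
    exp (d / 2) * (1 + exp a) ≤ 1 + exp (a + d) := by
  have h1 : 1 ≤ exp (d / 2) := one_le_exp (by linarith)
  have h2 : 1 ≤ exp (a + d / 2) := one_le_exp had
  have hfac : exp (a + d) = exp (a + d / 2) * exp (d / 2) := by rw [← exp_add]; ring_nf
  have hfac' : exp (d / 2) * exp a = exp (a + d / 2) := by rw [← exp_add]; ring_nf
  nlinarith [mul_nonneg (sub_nonneg.2 h1) (sub_nonneg.2 h2)]

lemma exp_one_third_le : exp (1 / 3) ≤ 3 / 2 := by
  have h := add_one_le_exp (-(1 / 3))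
  rw [exp_neg] at h
  have := exp_pos (1 / 3)
  rw [le_inv_comm₀ (by norm_num) this] at h
  linarith

lemma one_add_exp_add_le_of_le_mul {x y dx dy r : ℝ} (hr : 0 ≤ r)
    (h : 1 + exp y ≤ r * (1 + exp x)) :
    1 + exp (y + dy) ≤ exp (max dy 0 + max (-dx) 0) * r * (1 + exp (x + dx)) := by
  have hx := one_add_exp_add_le (x + dx) (-dx)
  rw [add_neg_cancel_right] at hx
  calc 1 + exp (y + dy) ≤ exp (max dy 0) * (1 + exp y) := one_add_exp_add_le y dy
    _ ≤ exp (max dy 0) * (r * (exp (max (-dx) 0) * (1 + exp (x + dx)))) :=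
        mul_le_mul_of_nonneg_left (h.trans (mul_le_mul_of_nonneg_left hx hr)) (exp_pos _).le
    _ = exp (max dy 0 + max (-dx) 0) * r * (1 + exp (x + dx)) := by
        rw [exp_add (max dy 0)]; ring

lemma one_add_exp_add_le_of_le_mul_of_le_half {x y dx dy r : ℝ} (hr : 0 ≤ r)
    (h : 1 + exp y ≤ r * (1 + exp x)) (hx : 0 ≤ x) (hdx : 0 ≤ dx) (hdy : dy ≤ dx / 2) :
    1 + exp (y + dy) ≤ r * (1 + exp (x + dx)) := by
  calc 1 + exp (y + dy) ≤ exp (max dy 0) * (1 + exp y) := one_add_exp_add_le y dy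
    _ ≤ exp (dx / 2) * (r * (1 + exp x)) := by
        gcongr
        exact max_le hdy (by linarith)
    _ = r * (exp (dx / 2) * (1 + exp x)) := by ring
    _ ≤ r * (1 + exp (x + dx)) := by
        gcongr
        exact exp_half_mul_one_add_exp_le hdx (by linarith)

lemma inv_one_add_exp_mem_Icc {x : ℝ} (hx : 0 ≤ x) : (1 + exp x)⁻¹ ∈ Set.Icc 0 (1 / 2) := by
  refine ⟨by positivity, ?_⟩
  rw [inv_le_comm₀ (by positivity) (by norm_num)]
  linarith [one_le_exp hx]

lemma inv_le_mul_inv_of_le_mul {x y r : ℝ} (hx : 0 < x) (hy : 0 < y) (h : y ≤ r * x) :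
    x⁻¹ ≤ r * y⁻¹ := by
  rw [← div_eq_mul_inv, le_div_iff₀ hy, inv_mul_le_iff₀ hx]
  linarith

lemma mul_inv_le_inv_of_mul_le {x y r : ℝ} (hx : 0 < x) (hy : 0 < y) (h : r * x ≤ y) :
    r * y⁻¹ ≤ x⁻¹ := by
  rw [← div_eq_mul_inv, div_le_iff₀ hy, le_inv_mul_iff₀ hx]
  linarith

lemma mul_mul_le_half_of_le {β c A s : ℝ} (hc : 0 < c) (hA : 0 < A) (hs : 0 ≤ s)
    (hβ : β ≤ 1 / (2 * c) * (A + s)⁻¹) : β * (c * A) ≤ 1 / 2 :=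
  calc β * (c * A) ≤ 1 / (2 * c) * (A + s)⁻¹ * (c * (A + s)) := by gcongr; linarith
    _ = 1 / 2 := by field_simp

section GradientStep

variable {ι : Type*}

def LossRatioInvariant (K : ℝ) (a : ι → ℝ) : Prop :=
  (∀ k, 0 ≤ a k) ∧ ∀ i j, 1 + exp (a j) ≤ K * (1 + exp (a i))

lemma lossRatioInvariant_zero {K : ℝ} (hK : 1 ≤ K) : LossRatioInvariant K (0 : ι → ℝ) :=
  ⟨fun _ => le_rfl, fun _ _ => by simp only [Pi.zero_apply, exp_zero]; linarith⟩

variable [Fintype ι]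

/-- The Gram matrix `W k i = z_k · z_i` of `n = card ι` nearly orthogonal vectors of squared
length about `A`. -/
structure NearlyOrthogonalGram (W : ι → ι → ℝ) (c B A : ℝ) : Prop where
  one_le_c : 1 ≤ c
  nonneg_B : 0 ≤ B
  diag_ge : ∀ k, A / c ≤ W k k
  diag_le : ∀ k, W k k ≤ c * A
  abs_offDiag_le : ∀ k i, k ≠ i → |W k i| ≤ c * B
  offDiag_small : 8 * c ^ 2 * Fintype.card ι * B ≤ A

/-- The increment of the margins `a` in one gradient step with step size `β`. -/
noncomputable def marginIncrement (W : ι → ι → ℝ) (β : ℝ) (a : ι → ℝ) (i : ι) : ℝ :=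
  β * ∑ l, (1 + exp (a l))⁻¹ * W l i

namespace NearlyOrthogonalGram

variable {W : ι → ι → ℝ} {c B A : ℝ}

lemma c_pos (hW : NearlyOrthogonalGram W c B A) : 0 < c := by linarith [hW.one_le_c]

lemma nonneg_A (hW : NearlyOrthogonalGram W c B A) : 0 ≤ A :=
  le_trans (by have := hW.nonneg_B; positivity) hW.offDiag_small

lemma abs_sum_mul_sub_diag_le (hW : NearlyOrthogonalGram W c B A) {g : ι → ℝ} {M : ℝ}
    (hg : ∀ l, g l ∈ Set.Icc 0 M) (i : ι) :
    8 * c * |∑ l, g l * W l i - g i * W i i| ≤ M * A := by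
  classical
  have hc := hW.c_pos
  have hM : 0 ≤ M := (hg i).1.trans (hg i).2
  have hcB : 0 ≤ c * B := mul_nonneg hc.le hW.nonneg_B
  have hoff : |∑ l ∈ univ.erase i, g l * W l i| ≤ Fintype.card ι * (M * (c * B)) :=
    calc |∑ l ∈ univ.erase i, g l * W l i| ≤ ∑ l ∈ univ.erase i, |g l * W l i| :=
          abs_sum_le_sum_abs _ _
      _ ≤ ∑ _l ∈ univ.erase i, M * (c * B) := by
          refine sum_le_sum fun l hl => ?_
          rw [abs_mul, abs_of_nonneg (hg l).1]
          exact mul_le_mul (hg l).2 (hW.abs_offDiag_le l i (ne_of_mem_erase hl))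
            (abs_nonneg _) hM
      _ ≤ ∑ _l : ι, M * (c * B) :=
          sum_le_sum_of_subset_of_nonneg (erase_subset i univ) fun _ _ _ => by positivity
      _ = Fintype.card ι * (M * (c * B)) := by rw [sum_const, card_univ, nsmul_eq_mul]
  rw [← add_sum_erase _ _ (mem_univ i), add_sub_cancel_left]
  have := mul_le_mul_of_nonneg_left hW.offDiag_small hM
  nlinarith

lemma marginIncrement_mem_Icc (hW : NearlyOrthogonalGram W c B A) {β : ℝ} (hβ0 : 0 ≤ β)
    (hβ : β * (c * A) ≤ 1 / 2) {a : ι → ℝ} (ha : ∀ k, 0 ≤ a k) (i : ι) :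
    marginIncrement W β a i ∈ Set.Icc (-(1 / 32)) (9 / 32) := by
  have hc := hW.c_pos
  have hA := hW.nonneg_A
  have hg := fun l => inv_one_add_exp_mem_Icc (ha l)
  set S := ∑ l, (1 + exp (a l))⁻¹ * W l i
  set D := (1 + exp (a i))⁻¹ * W i i
  have hSD : 8 * c * |S - D| ≤ 1 / 2 * A := hW.abs_sum_mul_sub_diag_le hg i
  have hD0 : 0 ≤ D := mul_nonneg (hg i).1 ((div_nonneg hA hc.le).trans (hW.diag_ge i))
  have hD1 : D ≤ 1 / 2 * (c * A) :=
    mul_le_mul (hg i).2 (hW.diag_le i) ((div_nonneg hA hc.le).trans (hW.diag_ge i)) (by norm_num)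
  have hβA : β * A ≤ 1 / 2 := by nlinarith [hW.one_le_c, mul_nonneg hβ0 hA]
  have hdev : |β * S - β * D| ≤ 1 / 32 := by
    rw [← mul_sub, abs_mul, abs_of_nonneg hβ0]
    nlinarith [hW.one_le_c, mul_nonneg hβ0 (abs_nonneg (S - D))]
  have hdiag : β * D ≤ 1 / 4 := by nlinarith
  have hβD := mul_nonneg hβ0 hD0
  constructor <;> simp only [marginIncrement] <;> linarith [abs_le.1 hdev]

lemma marginIncrement_nonneg_of_le_weight (hW : NearlyOrthogonalGram W c B A) {β : ℝ}
    (hβ0 : 0 ≤ β) {a : ι → ℝ} (ha : ∀ k, 0 ≤ a k) {k : ι} (hk : 1 / 16 ≤ (1 + exp (a k))⁻¹) :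
    0 ≤ marginIncrement W β a k := by
  have hc := hW.c_pos
  have hA := hW.nonneg_A
  have hg := fun l => inv_one_add_exp_mem_Icc (ha l)
  have hSD := hW.abs_sum_mul_sub_diag_le hg k
  have hD : 1 / 16 * (A / c) ≤ (1 + exp (a k))⁻¹ * W k k :=
    mul_le_mul hk (hW.diag_ge k) (div_nonneg hA hc.le) (hg k).1
  have hAc : c * (A / c) = A := mul_div_cancel₀ A hc.ne'
  refine mul_nonneg hβ0 ?_
  nlinarith [neg_abs_le (∑ l, (1 + exp (a l))⁻¹ * W l k - (1 + exp (a k))⁻¹ * W k k)]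

lemma marginIncrement_le_half (hW : NearlyOrthogonalGram W c B A) {β : ℝ} (hβ0 : 0 ≤ β)
    {a : ι → ℝ} (ha : LossRatioInvariant (8 * c ^ 2) a) {i j : ι}
    (hij : 2 / 3 * (8 * c ^ 2) * (1 + exp (a i)) < 1 + exp (a j)) :
    0 ≤ marginIncrement W β a i ∧ marginIncrement W β a j ≤ marginIncrement W β a i / 2 := by
  have hc := hW.c_pos
  have hA := hW.nonneg_A
  set g := fun l => (1 + exp (a l))⁻¹
  have hN : ∀ l, 0 < 1 + exp (a l) := fun l => by positivity
  have hgj : 0 ≤ g j := by positivity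
  have hg : ∀ l, g l ∈ Set.Icc 0 (8 * c ^ 2 * g j) :=
    fun l => ⟨by positivity, inv_le_mul_inv_of_le_mul (hN l) (hN j) (ha.2 l j)⟩
  have hgi : 2 / 3 * (8 * c ^ 2) * g j ≤ g i := mul_inv_le_inv_of_mul_le (hN i) (hN j) hij.le
  have hcgA : 0 ≤ c * (g j * A) := by positivity
  have hdev : ∀ l, |∑ k, g k * W k l - g l * W l l| ≤ c * (g j * A) := fun l =>
    le_of_mul_le_mul_left (by linarith [hW.abs_sum_mul_sub_diag_le hg l])
      (by positivity : 0 < 8 * c)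
  have hDi : 16 / 3 * (c * (g j * A)) ≤ g i * W i i :=
    calc 16 / 3 * (c * (g j * A)) = 2 / 3 * (8 * c ^ 2) * g j * (A / c) := by field_simp; ring
      _ ≤ g i * W i i := mul_le_mul hgi (hW.diag_ge i) (div_nonneg hA hc.le) (by positivity)
  have hDj : g j * W j j ≤ c * (g j * A) := by
    nlinarith [mul_le_mul_of_nonneg_left (hW.diag_le j) hgj]
  have hSi : 13 / 3 * (c * (g j * A)) ≤ ∑ l, g l * W l i := by linarith [abs_le.1 (hdev i)]
  have hSj : ∑ l, g l * W l j ≤ 2 * (c * (g j * A)) := by linarith [abs_le.1 (hdev j)]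
  have hji : 2 * ∑ l, g l * W l j ≤ ∑ l, g l * W l i := by linarith
  show 0 ≤ β * ∑ l, g l * W l i ∧ β * ∑ l, g l * W l j ≤ β * (∑ l, g l * W l i) / 2
  exact ⟨mul_nonneg hβ0 (by linarith), by linarith [mul_le_mul_of_nonneg_left hji hβ0]⟩

lemma lossRatioInvariant_add_marginIncrement (hW : NearlyOrthogonalGram W c B A) {β : ℝ}
    (hβ0 : 0 ≤ β) (hβ : β * (c * A) ≤ 1 / 2) {a : ι → ℝ}
    (ha : LossRatioInvariant (8 * c ^ 2) a) :
    LossRatioInvariant (8 * c ^ 2) (a + marginIncrement W β a) := by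
  refine ⟨fun k => ?_, fun i j => ?_⟩
  · rw [Pi.add_apply]
    by_cases hk : 1 / 16 ≤ (1 + exp (a k))⁻¹
    · exact add_nonneg (ha.1 k) (hW.marginIncrement_nonneg_of_le_weight hβ0 ha.1 hk)
    · have h16 : 16 < 1 + exp (a k) := by
        rw [not_le, inv_lt_comm₀ (by positivity) (by norm_num)] at hk
        linarith
      have ha1 : 1 < a k := exp_lt_exp.1 (by linarith [exp_one_lt_d9])
      linarith [(hW.marginIncrement_mem_Icc hβ0 hβ ha.1 k).1]
  · simp only [Pi.add_apply]
    by_cases hij : 1 + exp (a j) ≤ 2 / 3 * (8 * c ^ 2) * (1 + exp (a i))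
    · have hi := hW.marginIncrement_mem_Icc hβ0 hβ ha.1 i
      have hj := hW.marginIncrement_mem_Icc hβ0 hβ ha.1 j
      have hexp : exp (max (marginIncrement W β a j) 0 + max (-marginIncrement W β a i) 0) ≤
          3 / 2 := by
        refine (exp_le_exp.2 ?_).trans exp_one_third_le
        linarith [max_le hj.2 (by norm_num : (0 : ℝ) ≤ 9 / 32),
          max_le (neg_le.1 hi.1) (by norm_num : (0 : ℝ) ≤ 1 / 32)]
      calc _ ≤ _ := one_add_exp_add_le_of_le_mul (by positivity) hij
        _ ≤ 3 / 2 * (2 / 3 * (8 * c ^ 2)) * (1 + exp (a i + marginIncrement W β a i)) := by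
          gcongr
        _ = _ := by ring
    · obtain ⟨hi0, hji⟩ := hW.marginIncrement_le_half hβ0 ha (not_le.1 hij)
      exact one_add_exp_add_le_of_le_mul_of_le_half (by positivity) (ha.2 i j) (ha.1 i) hi0 hji

end NearlyOrthogonalGram

end GradientStep

lemma dotp_add_smul_sum {p : ℕ} {ι : Type*} [Fintype ι] (θ v : Fin p → ℝ) (β : ℝ)
    (g : ι → ℝ) (z : ι → Fin p → ℝ) :
    dotp (θ + β • ∑ k, g k • z k) v = dotp θ v + β * ∑ k, g k * dotp (z k) v := by
  change (θ + β • ∑ k, g k • z k) ⬝ᵥ v = θ ⬝ᵥ v + β * ∑ k, g k * (z k ⬝ᵥ v)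
  simp only [add_dotProduct, smul_dotProduct, sum_dotProduct, smul_eq_mul]

lemma dotp_self {p : ℕ} (u : Fin p → ℝ) : dotp u u = sqnorm u := by
  simp only [dotp, sqnorm, sq]

/-- along gradient descent on the logistic loss with a small enough
learning rate, the ratio of sigmoid losses between any two samples is uniformly bounded
by a constant `c₃` (one may take `c₃ = 8 c₁²`). -/
theorem sigmoid_loss_ratio_bounded
    (p n : ℕ) (z : Fin n → Fin p → ℝ) (c₁ B β : ℝ)
    (hc₁ : 1 ≤ c₁) (hB : 0 < B)
    (h1 : ∀ k, (p : ℝ) / c₁ ≤ sqnorm (z k) ∧ sqnorm (z k) ≤ c₁ * p)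
    (h2 : ∀ i j, i ≠ j → |dotp (z i) (z j)| ≤ c₁ * B)
    (hp : 8 * c₁ ^ 2 * n * B < (p : ℝ))
    (hβpos : 0 < β)
    (hβ : β ≤ 1 / (2 * c₁) * ((p : ℝ) + 2 * n * B)⁻¹)
    (θ : ℕ → Fin p → ℝ) (hθ0 : θ 0 = 0)
    (hθ : ∀ t, θ (t + 1) = θ t + β • ∑ k, (1 + Real.exp (dotp (θ t) (z k)))⁻¹ • z k) :
    ∃ c₃ : ℝ, ∀ t, ∀ i j,
      (1 + Real.exp (dotp (θ t) (z j))) / (1 + Real.exp (dotp (θ t) (z i))) ≤ c₃ := by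
  have hW : NearlyOrthogonalGram (fun k i => dotp (z k) (z i)) c₁ B p :=
    { one_le_c := hc₁
      nonneg_B := hB.le
      diag_ge := fun k => (dotp_self (z k)).symm ▸ (h1 k).1
      diag_le := fun k => (dotp_self (z k)).symm ▸ (h1 k).2
      abs_offDiag_le := h2
      offDiag_small := by simpa using hp.le }
  have hβ' : β * (c₁ * p) ≤ 1 / 2 :=
    mul_mul_le_half_of_le (by positivity) (hp.trans_le' (by positivity)) (by positivity) hβ
  have hinv : ∀ t, LossRatioInvariant (8 * c₁ ^ 2) fun k => dotp (θ t) (z k) := by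
    intro t
    induction t with
    | zero =>
      have hzero : (fun k => dotp (θ 0) (z k)) = 0 := by ext k; simp [hθ0, dotp]
      rw [hzero]
      exact lossRatioInvariant_zero (by nlinarith)
    | succ t ih =>
      convert hW.lossRatioInvariant_add_marginIncrement hβpos.le hβ' ih using 1
      ext k
      simp only [hθ, dotp_add_smul_sum, Pi.add_apply, marginIncrement]
  refine ⟨8 * c₁ ^ 2, fun t i j => ?_⟩
  exact (div_le_iff₀ (by positivity)).2 ((hinv t).2 i j)
end

section
/- Let γ > 0, σ > 0, and let X be a real random variable with the generalized normal density f(x) = γ/(2σΓ(1/γ)) · exp(−|x/σ|^γ) (location parameter 0). Then the exponential Orlicz norm of X of order γ equals σ/(1 − 2^{−γ})^{1/γ}, i.e., ‖X‖_{ψ_γ} = σ (1 − 2^{−γ})^{−1/γ}; moreover γ is the largest α for which ‖X‖_{ψ_α} is finite. -/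
open MeasureTheory Real
open scoped ENNReal

/-! Under the generalized normal law `|X / σ| ^ γ` is Gamma-distributed with shape `1 / γ`, so
`E[exp (s |X / σ| ^ γ)] = (1 - s) ^ (-1 / γ)` for `s < 1` and `= ∞` for `s ≥ 1`. Since
`|X| ^ γ / t ^ γ = (σ / t) ^ γ |X / σ| ^ γ`, the level `t` is admissible exactly when
`(σ / t) ^ γ ≤ 1 - 2 ^ (-γ)`, i.e. `t ≥ σ (1 - 2 ^ (-γ)) ^ (-1 / γ)`. For `a > γ` the term
`|x| ^ a / t ^ a` eventually dominates `|x / σ| ^ γ`, so against Lebesgue measure the integrand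
is at least the normalising constant of the density on a half-line, and no level is admissible. -/

open Set Filter

theorem integrable_exp_neg_mul_abs_rpow {p b : ℝ} (hp : 0 < p) (hb : 0 < b) :
    Integrable fun x : ℝ => exp (-b * |x| ^ p) := by
  have h := integrableOn_rpow_mul_exp_neg_mul_rpow (s := 0) neg_one_lt_zero hp hb
  have := (integrable_fun_norm_addHaar (volume : Measure ℝ)
    (f := fun y => exp (-b * y ^ p))).2 (by simpa using h)
  exact this.congr (ae_of_all _ fun x => by simp)

theorem integral_exp_neg_mul_abs_rpow {p b : ℝ} (hp : 0 < p) (hb : 0 < b) :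
    ∫ x : ℝ, exp (-b * |x| ^ p) = 2 * (b ^ (-1 / p) * Gamma (1 / p + 1)) := by
  rw [integral_comp_abs (f := fun y => exp (-b * y ^ p)), integral_exp_neg_mul_rpow hp hb]

theorem lintegral_ofReal_eq_top_of_eventually_le {f : ℝ → ℝ} {c : ℝ} (hc : 0 < c)
    (hf : ∀ᶠ x in atTop, c ≤ f x) : ∫⁻ x, ENNReal.ofReal (f x) = ⊤ := by
  obtain ⟨R, hR⟩ := eventually_atTop.1 hf
  refine eq_top_iff.2 ?_
  calc (⊤ : ℝ≥0∞) = ∫⁻ _ in Ici R, ENNReal.ofReal c := by simp [hc]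
    _ ≤ ∫⁻ x in Ici R, ENNReal.ofReal (f x) :=
      setLIntegral_mono' measurableSet_Ici fun x hx => ENNReal.ofReal_le_ofReal (hR x hx)
    _ ≤ ∫⁻ x, ENNReal.ofReal (f x) := setLIntegral_le_lintegral _ _

theorem eventually_abs_div_rpow_le_abs_rpow_div {σ t γ a : ℝ} (hσ : 0 < σ) (ht : 0 < t)
    (ha : γ < a) : ∀ᶠ x in atTop, |x / σ| ^ γ ≤ |x| ^ a / t ^ a := by
  filter_upwards [eventually_gt_atTop 0,
    (tendsto_rpow_atTop (sub_pos.2 ha)).eventually_ge_atTop (t ^ a / σ ^ γ)] with x hx hxa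
  have hσγ : 0 < σ ^ γ := rpow_pos_of_pos hσ γ
  have hta : 0 < t ^ a := rpow_pos_of_pos ht a
  rw [abs_of_pos (div_pos hx hσ), abs_of_pos hx, div_rpow hx.le hσ.le,
    div_le_div_iff₀ hσγ hta, show x ^ a = x ^ γ * x ^ (a - γ) by rw [← rpow_add hx]; ring_nf,
    mul_assoc]
  rw [div_le_iff₀ hσγ] at hxa
  exact mul_le_mul_of_nonneg_left hxa (rpow_nonneg hx.le γ)

section GenNormal

variable {σ γ : ℝ}

theorem lintegral_exp_genNormal {g : ℝ → ℝ} (hg : Measurable g) :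
    ∫⁻ x, ENNReal.ofReal (exp (g x)) ∂genNormal σ γ =
      ∫⁻ x, ENNReal.ofReal (γ / (2 * σ * Gamma (1 / γ)) * exp (g x - |x / σ| ^ γ)) := by
  rw [genNormal, lintegral_withDensity_eq_lintegral_mul _ (by fun_prop) (by fun_prop)]
  refine lintegral_congr fun x => ?_
  rw [Pi.mul_apply, ← ENNReal.ofReal_mul' (exp_pos _).le, mul_assoc, ← exp_add, neg_add_eq_sub]

theorem lintegral_exp_genNormal_eq_top (hσ : 0 < σ) (hγ : 0 < γ) {g : ℝ → ℝ}
    (hg : Measurable g) (h : ∀ᶠ x in atTop, |x / σ| ^ γ ≤ g x) :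
    ∫⁻ x, ENNReal.ofReal (exp (g x)) ∂genNormal σ γ = ⊤ := by
  have hc : 0 < γ / (2 * σ * Gamma (1 / γ)) := by
    have := Gamma_pos_of_pos (one_div_pos.2 hγ)
    positivity
  rw [lintegral_exp_genNormal hg]
  refine lintegral_ofReal_eq_top_of_eventually_le hc (h.mono fun x hx => ?_)
  exact le_mul_of_one_le_right hc.le (one_le_exp (sub_nonneg.2 hx))

theorem lintegral_exp_mul_abs_div_rpow_genNormal (hσ : 0 < σ) (hγ : 0 < γ) {s : ℝ}
    (hs : s < 1) :
    ∫⁻ x, ENNReal.ofReal (exp (s * |x / σ| ^ γ)) ∂genNormal σ γ =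
      ENNReal.ofReal ((1 - s) ^ (-(1 / γ))) := by
  have hint : Integrable fun x => exp (-(1 - s) * |x / σ| ^ γ) :=
    (integrable_exp_neg_mul_abs_rpow hγ (sub_pos.2 hs)).comp_div hσ.ne'
  have hΓ := Gamma_pos_of_pos (one_div_pos.2 hγ)
  rw [lintegral_exp_genNormal (by fun_prop)]
  simp_rw [show ∀ y : ℝ, s * y - y = -(1 - s) * y from fun y => by ring]
  rw [← ofReal_integral_eq_lintegral_ofReal (hint.const_mul _)
      (ae_of_all _ fun x => by positivity), integral_const_mul,
    Measure.integral_comp_div (fun x => exp (-(1 - s) * |x| ^ γ)),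
    integral_exp_neg_mul_abs_rpow hγ (sub_pos.2 hs), Gamma_add_one (one_div_pos.2 hγ).ne',
    abs_of_pos hσ, smul_eq_mul, neg_div]
  congr 1
  field_simp

theorem lintegral_exp_mul_abs_div_rpow_genNormal_le_two_iff (hσ : 0 < σ) (hγ : 0 < γ) {s : ℝ} :
    ∫⁻ x, ENNReal.ofReal (exp (s * |x / σ| ^ γ)) ∂genNormal σ γ ≤ 2 ↔ s ≤ 1 - 2 ^ (-γ) := by
  rcases lt_or_ge s 1 with hs | hs
  · rw [lintegral_exp_mul_abs_div_rpow_genNormal hσ hγ hs, ← ENNReal.ofReal_ofNat 2,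
      ENNReal.ofReal_le_ofReal_iff zero_le_two, show -(1 / γ) = (-γ)⁻¹ by rw [inv_neg, one_div],
      rpow_inv_le_iff_of_neg (sub_pos.2 hs) two_pos (neg_neg_of_pos hγ)]
    constructor <;> intro h <;> linarith
  · rw [lintegral_exp_genNormal_eq_top hσ hγ (by fun_prop)
      (Eventually.of_forall fun x => le_mul_of_one_le_left (by positivity) hs)]
    have := rpow_pos_of_pos two_pos (-γ)
    simp only [top_le_iff, ENNReal.ofNat_ne_top, false_iff, not_le]
    linarith

theorem orliczSet_genNormal (hσ : 0 < σ) (hγ : 0 < γ) :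
    orliczSet (genNormal σ γ) γ (fun x => x) = Ici (σ * (1 - 2 ^ (-γ)) ^ (-(1 / γ))) := by
  have hK : 0 < 1 - (2 : ℝ) ^ (-γ) :=
    sub_pos.2 (rpow_lt_one_of_one_lt_of_neg one_lt_two (neg_neg_of_pos hγ))
  have hmem : ∀ t, 0 < t → (t ∈ orliczSet (genNormal σ γ) γ (fun x => x) ↔
      σ * (1 - 2 ^ (-γ)) ^ (-(1 / γ)) ≤ t) := fun t ht => by
    have hrescale : ∀ x : ℝ, |x| ^ γ / t ^ γ = (σ / t) ^ γ * |x / σ| ^ γ := fun x => by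
      rw [← div_rpow (abs_nonneg x) ht.le, ← mul_rpow (div_pos hσ ht).le (abs_nonneg _),
        abs_div, abs_of_pos hσ]
      field_simp
    simp only [orliczSet, mem_ofPred_eq, hrescale, ht, true_and,
      lintegral_exp_mul_abs_div_rpow_genNormal_le_two_iff hσ hγ]
    rw [← le_rpow_inv_iff_of_pos (div_pos hσ ht).le hK.le hγ, div_le_iff₀ ht, rpow_neg hK.le,
      one_div, ← div_eq_mul_inv, div_le_iff₀ (rpow_pos_of_pos hK _), mul_comm]
  ext t
  refine ⟨fun ht => (hmem t ht.1).1 ht, fun ht => (hmem t ?_).2 ht⟩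
  exact lt_of_lt_of_le (by positivity) ht

theorem orliczSet_genNormal_eq_empty {a : ℝ} (hσ : 0 < σ) (hγ : 0 < γ) (ha : γ < a) :
    orliczSet (genNormal σ γ) a (fun x => x) = ∅ := by
  refine eq_empty_of_forall_notMem fun t ⟨ht, hle⟩ => ?_
  rw [lintegral_exp_genNormal_eq_top hσ hγ (by fun_prop)
    (eventually_abs_div_rpow_le_abs_rpow_div hσ ht ha)] at hle
  exact ENNReal.ofNat_ne_top (top_le_iff.1 hle)

end GenNormal

/-- for the generalized normal distribution with location `0`, scale `σ`
and shape `γ`, the exponential Orlicz norm of order `γ` equals `σ (1 − 2^{−γ})^{−1/γ}`;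
moreover the `ψ_γ` norm is finite (the admissible set is nonempty) and `γ` is the largest
order `α` with finite `ψ_α` norm (for `α > γ` the admissible set is empty). -/
theorem genNormal_orlicz_norm (γ σ : ℝ) (hγ : 0 < γ) (hσ : 0 < σ) :
    orliczNorm (genNormal σ γ) γ (fun x => x) = σ * (1 - 2 ^ (-γ)) ^ (-(1 / γ)) ∧
    (orliczSet (genNormal σ γ) γ (fun x => x)).Nonempty ∧
    ∀ a : ℝ, γ < a → orliczSet (genNormal σ γ) a (fun x => x) = ∅ := by
  rw [orliczNorm, orliczSet_genNormal hσ hγ, csInf_Ici]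
  exact ⟨rfl, nonempty_Ici, fun a ha => orliczSet_genNormal_eq_empty hσ hγ ha⟩
end
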